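/- arXiv:cond-mat/0703199 — 3 statements merged into one kernel-verified Lean document; each statement's English description precedes it below -/
import Mathlib

section
/- Define Δ(β,J_A) = e_A(β,J_A) + J_A tanh(βJ_A), where e_A(β,J_A) = −⟨J_A∏_{i∈A}S_i⟩_β. Then for J_A ≠ 0, Δ satisfies the identity Δ(β,−J_A) = −Δ(β,J_A) / (1 + (sinh(2βJ_A)/J_A)·Δ(β,J_A)). -/
/-!
Write `σ_A = ∏_{i ∈ A} S_i` and `m = ⟨σ_A⟩_β`. Since `σ_A² = 1`, flipping `J_A` multiplies every
Boltzmann weight by `exp (-2βJ_A σ_A) = cosh (2βJ_A) - sinh (2βJ_A) σ_A`. Hence the partition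
function is rescaled by `D = cosh (2βJ_A) - sinh (2βJ_A) m > 0`, and the flipped average is the
Möbius image `m' = (cosh (2βJ_A) m - sinh (2βJ_A)) / D`. As `Δ(β, J_A) = J_A (tanh (βJ_A) - m)` and
`Δ(β, -J_A) = J_A (m' + tanh (βJ_A))`, the identity reduces to hyperbolic trigonometry, in which
the denominator `1 + sinh (2βJ_A) / J_A · Δ(β, J_A)` is exactly `D`.
-/

open Finset Real

/-- Spin value of a Boolean spin variable: `true ↦ 1`, `false ↦ -1`. -/
def spin (b : Bool) : ℝ := if b then 1 else -1

/-- Energy of a finite Ising system: `H(S) = -∑_{A ⊆ V} J_A ∏_{i ∈ A} S_i`. -/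
noncomputable def energy {V : Type*} [Fintype V] [DecidableEq V]
    (J : Finset V → ℝ) (S : V → Bool) : ℝ :=
  -∑ A : Finset V, J A * ∏ i ∈ A, spin (S i)

/-- Partition function `Z(β, J) = ∑_S exp (-β H(S))`. -/
noncomputable def Z {V : Type*} [Fintype V] [DecidableEq V]
    (β : ℝ) (J : Finset V → ℝ) : ℝ :=
  ∑ S : V → Bool, Real.exp (-β * energy J S)

/-- Thermal average `⟨f⟩_β = Z⁻¹ ∑_S f(S) exp (-β H(S))`. -/
noncomputable def texp {V : Type*} [Fintype V] [DecidableEq V]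
    (β : ℝ) (J : Finset V → ℝ) (f : (V → Bool) → ℝ) : ℝ :=
  (∑ S : V → Bool, f S * Real.exp (-β * energy J S)) / Z β J

/-- Thermal average of the local energy of subset `A`:
`e_A(β, J_A) = -⟨J_A ∏_{i ∈ A} S_i⟩_β`. -/
noncomputable def eA {V : Type*} [Fintype V] [DecidableEq V]
    (β : ℝ) (J : Finset V → ℝ) (A : Finset V) : ℝ :=
  texp β J (fun S => -(J A * ∏ i ∈ A, spin (S i)))

/-- Deviation of the local energy from its isolated value:
`Δ(β, J_A) = e_A(β, J_A) + J_A tanh (β J_A)`. -/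
noncomputable def Δ {V : Type*} [Fintype V] [DecidableEq V]
    (β : ℝ) (J : Finset V → ℝ) (A : Finset V) : ℝ :=
  eA β J A + J A * Real.tanh (β * J A)

/-- Couplings with the single coupling `J_A` negated. -/
noncomputable def flipJ {V : Type*} [DecidableEq V]
    (J : Finset V → ℝ) (A : Finset V) : Finset V → ℝ :=
  Function.update J A (-(J A))

lemma spin_mul_self (b : Bool) : spin b * spin b = 1 := by
  cases b <;> norm_num [spin]

lemma Real.exp_mul_eq_cosh_add_sinh_mul {σ : ℝ} (hσ : σ * σ = 1) (y : ℝ) :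
    exp (y * σ) = cosh y + sinh y * σ := by
  rcases mul_self_eq_one_iff.1 hσ with rfl | rfl
  · simp [cosh_add_sinh]
  · simp [← sub_eq_add_neg, cosh_sub_sinh]

lemma Real.sinh_two_mul_mul_tanh (x : ℝ) : sinh (2 * x) * tanh x = cosh (2 * x) - 1 := by
  have hc : cosh x ≠ 0 := (cosh_pos x).ne'
  rw [sinh_two_mul, cosh_two_mul, tanh_eq_sinh_div_cosh, mul_div_assoc', div_eq_iff hc]
  linear_combination (-cosh x) * cosh_sq_sub_sinh_sq x

lemma Real.tanh_mul_cosh_two_mul_add_one (x : ℝ) : tanh x * (cosh (2 * x) + 1) = sinh (2 * x) := by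
  have hc : cosh x ≠ 0 := (cosh_pos x).ne'
  rw [sinh_two_mul, cosh_two_mul, tanh_eq_sinh_div_cosh, div_mul_eq_mul_div, div_eq_iff hc]
  linear_combination (-sinh x) * cosh_sq_sub_sinh_sq x

lemma mul_mobius_add_tanh_eq (J x m : ℝ) (hD : cosh (2 * x) - sinh (2 * x) * m ≠ 0) :
    J * ((cosh (2 * x) * m - sinh (2 * x)) / (cosh (2 * x) - sinh (2 * x) * m) + tanh x) =
      -(J * (tanh x - m)) / (1 + sinh (2 * x) / J * (J * (tanh x - m))) := by
  rcases eq_or_ne J 0 with rfl | hJ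
  · simp
  have hden : 1 + sinh (2 * x) / J * (J * (tanh x - m)) = cosh (2 * x) - sinh (2 * x) * m := by
    have hcancel : sinh (2 * x) / J * (J * (tanh x - m)) = sinh (2 * x) * (tanh x - m) := by
      field_simp
    linear_combination hcancel + sinh_two_mul_mul_tanh x
  rw [hden, eq_div_iff hD, mul_assoc, add_mul, div_mul_cancel₀ _ hD]
  linear_combination J * tanh_mul_cosh_two_mul_add_one x - J * m * sinh_two_mul_mul_tanh x

section Ising

variable {V : Type*}

def spinProd (A : Finset V) (S : V → Bool) : ℝ := ∏ i ∈ A, spin (S i)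

lemma spinProd_mul_self (A : Finset V) (S : V → Bool) : spinProd A S * spinProd A S = 1 := by
  rw [spinProd, ← prod_mul_distrib]
  exact prod_eq_one fun i _ => spin_mul_self (S i)

variable [Fintype V] [DecidableEq V] (β : ℝ) (J : Finset V → ℝ) (A : Finset V)

lemma energy_flipJ (S : V → Bool) :
    energy (flipJ J A) S = energy J S + 2 * J A * spinProd A S := by
  have hterm : ∀ B, flipJ J A B * ∏ i ∈ B, spin (S i) =
      J B * ∏ i ∈ B, spin (S i) - if B = A then 2 * J A * spinProd A S else 0 := by
    intro B
    by_cases hB : B = A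
    · subst hB
      simp only [flipJ, spinProd, Function.update_self, if_true]
      ring
    · simp [flipJ, hB]
  simp only [energy, hterm, sum_sub_distrib, sum_ite_eq', mem_univ, if_true]
  ring

lemma Z_pos : 0 < Z β J :=
  sum_pos (fun _ _ => exp_pos _) univ_nonempty

lemma texp_one : texp β J (fun _ => 1) = 1 := by
  simp only [texp, one_mul]
  exact div_self (Z_pos β J).ne'

lemma eA_eq : eA β J A = -(J A * texp β J (spinProd A)) := by
  simp only [eA, texp, spinProd, neg_mul, sum_neg_distrib, mul_assoc, ← mul_sum, neg_div,
    mul_div_assoc]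

lemma sum_mul_exp_energy_flipJ (f : (V → Bool) → ℝ) :
    ∑ S, f S * exp (-β * energy (flipJ J A) S) =
      Z β J * (cosh (2 * β * J A) * texp β J f -
        sinh (2 * β * J A) * texp β J (fun S => f S * spinProd A S)) := by
  have hweight : ∀ S, exp (-β * energy (flipJ J A) S) =
      exp (-β * energy J S) * (cosh (2 * β * J A) - sinh (2 * β * J A) * spinProd A S) := by
    intro S
    rw [energy_flipJ, show -β * (energy J S + 2 * J A * spinProd A S) =
      -β * energy J S + -(2 * β * J A) * spinProd A S by ring, exp_add,
      exp_mul_eq_cosh_add_sinh_mul (spinProd_mul_self A S), cosh_neg, sinh_neg]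
    ring
  have hZ : Z β J ≠ 0 := (Z_pos β J).ne'
  simp only [hweight, texp, mul_sub, mul_div_cancel₀ _ hZ, mul_left_comm (Z β J), mul_sum,
    ← sum_sub_distrib]
  exact sum_congr rfl fun S _ => by ring

lemma Z_flipJ : Z β (flipJ J A) =
    Z β J * (cosh (2 * β * J A) - sinh (2 * β * J A) * texp β J (spinProd A)) := by
  simpa [Z, texp_one] using sum_mul_exp_energy_flipJ β J A (fun _ => 1)

lemma texp_flipJ_spinProd : texp β (flipJ J A) (spinProd A) =
    (cosh (2 * β * J A) * texp β J (spinProd A) - sinh (2 * β * J A)) /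
      (cosh (2 * β * J A) - sinh (2 * β * J A) * texp β J (spinProd A)) := by
  rw [texp, sum_mul_exp_energy_flipJ, Z_flipJ]
  simp only [spinProd_mul_self, texp_one, mul_one]
  exact mul_div_mul_left _ _ (Z_pos β J).ne'

lemma cosh_sub_sinh_mul_texp_spinProd_pos : 0 < cosh (2 * β * J A) - sinh (2 * β * J A) * texp β J (spinProd A) :=
  pos_of_mul_pos_right (Z_flipJ β J A ▸ Z_pos β (flipJ J A)) (Z_pos β J).le

end Ising

theorem Delta_flip_identity_general {V : Type*} [Fintype V] [DecidableEq V]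
    (β : ℝ) (J : Finset V → ℝ) (A : Finset V) :
    Δ β (flipJ J A) A =
      -Δ β J A / (1 + Real.sinh (2 * β * J A) / J A * Δ β J A) := by
  have hflip : flipJ J A A = -J A := Function.update_self ..
  have hΔ : Δ β J A = J A * (tanh (β * J A) - texp β J (spinProd A)) := by
    rw [Δ, eA_eq]; ring
  have hΔflip : Δ β (flipJ J A) A =
      J A * (texp β (flipJ J A) (spinProd A) + tanh (β * J A)) := by
    rw [Δ, eA_eq, hflip, mul_neg, tanh_neg]; ring
  have h2 : 2 * β * J A = 2 * (β * J A) := by ring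
  rw [hΔflip, texp_flipJ_spinProd, hΔ, h2]
  exact mul_mobius_add_tanh_eq _ _ _ (h2 ▸ (cosh_sub_sinh_mul_texp_spinProd_pos β J A).ne')

/-- the sign-flipJ identity for `Δ`. -/
theorem Delta_flip_identity {V : Type*} [Fintype V] [DecidableEq V]
    (β : ℝ) (J : Finset V → ℝ) (A : Finset V) (hJ : J A ≠ 0) :
    Δ β (flipJ J A) A =
      -Δ β J A / (1 + Real.sinh (2 * β * J A) / J A * Δ β J A) :=
  Delta_flip_identity_general β J A
end

section
/- Consider a finite Ising system containing a triangle with ±J couplings and let e_TR(β,i) = e_{12}(β,i) + e_{23}(β,i) + e_{31}(β,i) denote the thermal-average triangle energy in bond configuration i, where configurations 1–4 are the four unfrustrated sign assignments of the triangle couplings (all other couplings fixed). Then (1/4)∑_{i=1}^{4} e_TR(β,i) ≥ −3J·(e^{2βJ} − e^{−2βJ})/(e^{2βJ} + 3e^{−2βJ}) for all β > 0. -/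
open Finset Real

/-- The four unfrustrated sign assignments of the triangle couplings. -/
def signsU : Fin 4 → Fin 3 → ℝ :=
  ![![1, 1, 1], ![1, -1, -1], ![-1, 1, -1], ![-1, -1, 1]]

/-!
Split the Hamiltonian into the three triangle bonds and the rest, which is the same in all four
configurations. In configuration `i` the triangle bonds contribute `-3J` when the bond products
`(S₁S₂, S₂S₃, S₃S₁)` form the `i`-th unfrustrated pattern and `+J` otherwise, so `e_TR(β, i)` is an
explicit function `triangleEnergy` of the probability `pᵢ` of that pattern under the Gibbs weight
of the remaining bonds. The four `pᵢ` sum to one and `triangleEnergy` is convex in `p` for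
`βJ ≥ 0`, so by Jensen (a tangent line at `p = 1 / 4`) the average is at least its value at
`1 / 4`, the isolated triangle.
-/

/-- Mean triangle energy when the Gibbs weight of the remaining bonds alone gives probability `p`
to the spin pattern favoured by the triangle couplings; `p = 1 / 4` is the isolated triangle. -/
noncomputable def triangleEnergy (β J p : ℝ) : ℝ :=
  -J * (3 * exp (2 * β * J) * p - exp (-(2 * β * J)) * (1 - p)) /
    (exp (2 * β * J) * p + exp (-(2 * β * J)) * (1 - p))

lemma triangleEnergy_quarter (β J : ℝ) :
    triangleEnergy β J (1 / 4) = -3 * J * (exp (2 * β * J) - exp (-(2 * β * J))) /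
      (exp (2 * β * J) + 3 * exp (-(2 * β * J))) := by
  unfold triangleEnergy
  rw [← mul_div_mul_right _ _ (four_ne_zero (α := ℝ))]
  ring_nf

lemma triangleEnergy_tangent {β J p : ℝ} (hβ : 0 ≤ β) (hJ : 0 ≤ J) (hp : 0 ≤ p) :
    triangleEnergy β J (1 / 4) -
        64 * J * exp (2 * β * J) * exp (-(2 * β * J)) /
          (exp (2 * β * J) + 3 * exp (-(2 * β * J))) ^ 2 * (p - 1 / 4) ≤
      triangleEnergy β J p := by
  unfold triangleEnergy
  set u := exp (2 * β * J)
  set v := exp (-(2 * β * J))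
  have hu : 0 < u := exp_pos _
  have hv : 0 < v := exp_pos _
  have hvu : v ≤ u := exp_le_exp.mpr (by nlinarith [mul_nonneg hβ hJ])
  have hD : 0 < u * p + v * (1 - p) := by nlinarith [mul_nonneg (sub_nonneg.2 hvu) hp]
  rw [← sub_nonneg]
  -- the slope is the derivative of `triangleEnergy β J` at `1 / 4`
  have key : -J * (3 * u * p - v * (1 - p)) / (u * p + v * (1 - p)) -
      (-J * (3 * u * (1 / 4) - v * (1 - 1 / 4)) / (u * (1 / 4) + v * (1 - 1 / 4)) -
        64 * J * u * v / (u + 3 * v) ^ 2 * (p - 1 / 4)) =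
      4 * J * u * v * (u - v) * (4 * p - 1) ^ 2 / ((u + 3 * v) ^ 2 * (u * p + v * (1 - p))) := by
    field_simp
    ring
  rw [key]
  have huv : 0 ≤ u - v := sub_nonneg.2 hvu
  positivity

lemma four_mul_triangleEnergy_quarter_le_sum {β J : ℝ} (hβ : 0 ≤ β) (hJ : 0 ≤ J)
    {p : Fin 4 → ℝ} (hp : ∀ i, 0 ≤ p i) (hp_sum : ∑ i, p i = 1) :
    4 * triangleEnergy β J (1 / 4) ≤ ∑ i, triangleEnergy β J (p i) := by
  calc 4 * triangleEnergy β J (1 / 4)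
      = ∑ i, (triangleEnergy β J (1 / 4) -
          64 * J * exp (2 * β * J) * exp (-(2 * β * J)) /
            (exp (2 * β * J) + 3 * exp (-(2 * β * J))) ^ 2 * (p i - 1 / 4)) := by
        rw [sum_sub_distrib, ← mul_sum, sum_sub_distrib, hp_sum]
        simp
    _ ≤ ∑ i, triangleEnergy β J (p i) :=
        sum_le_sum fun i _ => triangleEnergy_tangent hβ hJ (hp i)

def patternIndex (sa sb sc : Bool) : Fin 4 :=
  if sa = sb then (if sb = sc then 0 else 1) else (if sb = sc then 2 else 3)

lemma signsU_bond_sum (i : Fin 4) (sa sb sc : Bool) :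
    signsU i 0 * (spin sa * spin sb) + signsU i 1 * (spin sb * spin sc) +
      signsU i 2 * (spin sc * spin sa) = if patternIndex sa sb sc = i then 3 else -1 := by
  fin_cases i <;> cases sa <;> cases sb <;> cases sc <;>
    norm_num [signsU, spin, patternIndex, Fin.ext_iff, Matrix.cons_val_two, Matrix.tail_cons]

lemma sum_comp_ite_mul {Ω : Type*} [Fintype Ω] (s : Ω → Prop) [DecidablePred s] (φ : ℝ → ℝ)
    (x y : ℝ) (w : Ω → ℝ) :
    ∑ ω, φ (if s ω then x else y) * w ω =
      φ x * ∑ ω with s ω, w ω + φ y * ∑ ω with ¬s ω, w ω := by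
  simp only [apply_ite φ, ite_mul, sum_ite, mul_sum]

lemma two_level_average_eq_triangleEnergy {Ω : Type*} [Fintype Ω] (s : Ω → Prop)
    [DecidablePred s] {w : Ω → ℝ} (hw : ∑ ω, w ω ≠ 0) (β J : ℝ) :
    (∑ ω, -(J * (if s ω then 3 else -1)) * (exp (β * (J * (if s ω then 3 else -1))) * w ω)) /
        ∑ ω, exp (β * (J * (if s ω then 3 else -1))) * w ω =
      triangleEnergy β J ((∑ ω with s ω, w ω) / ∑ ω, w ω) := by
  have hnum := sum_comp_ite_mul s (fun t => -(J * t) * exp (β * (J * t))) 3 (-1) w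
  simp only [mul_assoc] at hnum
  rw [hnum, sum_comp_ite_mul s (fun t => exp (β * (J * t))),
    ← sum_filter_add_sum_filter_not univ s]
  rw [← sum_filter_add_sum_filter_not univ s] at hw
  have h3 : exp (β * (J * 3)) = exp (2 * β * J) * exp (β * J) := by rw [← exp_add]; ring_nf
  have h1 : exp (β * (J * -1)) = exp (-(2 * β * J)) * exp (β * J) := by rw [← exp_add]; ring_nf
  rw [h3, h1, triangleEnergy]
  field_simp
  ring

section IsingTriangle

variable {V : Type*} [DecidableEq V]

def triangleBonds (a b c : V) : Finset (Finset V) := {{a, b}, {b, c}, {c, a}}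

lemma sum_triangleBonds {M : Type*} [AddCommMonoid M] {a b c : V}
    (hab : a ≠ b) (hbc : b ≠ c) (hca : c ≠ a) (f : Finset V → M) :
    ∑ B ∈ triangleBonds a b c, f B = f {a, b} + f {b, c} + f {c, a} := by
  have hab_bc : ({a, b} : Finset V) ≠ {b, c} := fun h => by
    simpa [hab, hca.symm] using congrArg (a ∈ ·) h
  have hab_ca : ({a, b} : Finset V) ≠ {c, a} := fun h => by
    simpa [hab.symm, hbc] using congrArg (b ∈ ·) h
  have hbc_ca : ({b, c} : Finset V) ≠ {c, a} := fun h => by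
    simpa [hab.symm, hbc] using congrArg (b ∈ ·) h
  rw [triangleBonds, sum_insert (by simp [hab_bc, hab_ca]), sum_pair hbc_ca, add_assoc]

variable [Fintype V]

noncomputable def environmentWeight (β : ℝ) (J : Finset V → ℝ) (T : Finset (Finset V))
    (S : V → Bool) : ℝ :=
  exp (β * ∑ B ∈ Tᶜ, J B * ∏ i ∈ B, spin (S i))

lemma exp_neg_mul_energy (β : ℝ) (J : Finset V → ℝ) (T : Finset (Finset V)) (S : V → Bool) :
    exp (-β * energy J S) =
      exp (β * ∑ B ∈ T, J B * ∏ i ∈ B, spin (S i)) * environmentWeight β J T S := by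
  rw [environmentWeight, ← exp_add, energy, ← sum_add_sum_compl T]
  ring_nf

lemma environmentWeight_congr {β : ℝ} {J J' : Finset V → ℝ} {T : Finset (Finset V)}
    (h : ∀ B ∉ T, J B = J' B) : environmentWeight β J T = environmentWeight β J' T := by
  ext S
  simp only [environmentWeight]
  congr 2
  exact sum_congr rfl fun B hB => by rw [h B (mem_compl.1 hB)]

lemma sum_eA (β : ℝ) (J : Finset V → ℝ) (T : Finset (Finset V)) :
    ∑ B ∈ T, eA β J B = texp β J (fun S => -∑ B ∈ T, J B * ∏ i ∈ B, spin (S i)) := by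
  simp only [eA, texp, ← sum_div, ← sum_neg_distrib, sum_mul]
  rw [sum_comm]

noncomputable def patternProb (β : ℝ) (J : Finset V → ℝ) (a b c : V) (i : Fin 4) : ℝ :=
  (∑ S with patternIndex (S a) (S b) (S c) = i, environmentWeight β J (triangleBonds a b c) S) /
    ∑ S, environmentWeight β J (triangleBonds a b c) S

lemma patternProb_nonneg (β : ℝ) (J : Finset V → ℝ) (a b c : V) (i : Fin 4) :
    0 ≤ patternProb β J a b c i :=
  div_nonneg (sum_nonneg fun _ _ => (exp_pos _).le) (sum_nonneg fun _ _ => (exp_pos _).le)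

lemma sum_patternProb (β : ℝ) (J : Finset V → ℝ) (a b c : V) :
    ∑ i, patternProb β J a b c i = 1 := by
  simp only [patternProb, ← sum_div, sum_fiberwise]
  exact div_self (sum_pos (fun _ _ => exp_pos _) univ_nonempty).ne'

lemma eA_triangle_eq_triangleEnergy {β J₀ : ℝ} {a b c : V}
    (hab : a ≠ b) (hbc : b ≠ c) (hca : c ≠ a) {J : Finset V → ℝ} {i : Fin 4}
    (hJab : J {a, b} = signsU i 0 * J₀) (hJbc : J {b, c} = signsU i 1 * J₀)
    (hJca : J {c, a} = signsU i 2 * J₀) :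
    eA β J {a, b} + eA β J {b, c} + eA β J {c, a} =
      triangleEnergy β J₀ (patternProb β J a b c i) := by
  have hbonds (S : V → Bool) : ∑ B ∈ triangleBonds a b c, J B * ∏ v ∈ B, spin (S v) =
      J₀ * if patternIndex (S a) (S b) (S c) = i then 3 else -1 := by
    rw [sum_triangleBonds hab hbc hca, prod_pair hab, prod_pair hbc, prod_pair hca,
      hJab, hJbc, hJca, ← signsU_bond_sum]
    ring
  rw [← sum_triangleBonds hab hbc hca (eA β J), sum_eA, texp, Z]
  simp only [exp_neg_mul_energy β J (triangleBonds a b c), hbonds]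
  exact two_level_average_eq_triangleEnergy _
    (sum_pos (fun _ _ => exp_pos _) univ_nonempty).ne' β J₀

end IsingTriangle

/-- average of the triangle energy over the four unfrustrated
bond configurations is bounded below by the isolated unfrustrated triangle
energy. -/
theorem unfrustrated_average_bound {V : Type*} [Fintype V] [DecidableEq V]
    (β J0 : ℝ) (hβ : 0 < β) (hJ : 0 < J0) (a b c : V)
    (hab : a ≠ b) (hbc : b ≠ c) (hca : c ≠ a)
    (K : Fin 4 → Finset V → ℝ)
    (hKab : ∀ i, K i {a, b} = signsU i 0 * J0)
    (hKbc : ∀ i, K i {b, c} = signsU i 1 * J0)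
    (hKca : ∀ i, K i {c, a} = signsU i 2 * J0)
    (hoff : ∀ i j, ∀ B : Finset V,
      B ≠ {a, b} → B ≠ {b, c} → B ≠ {c, a} → K i B = K j B) :
    (1 / 4) * ∑ i : Fin 4,
        (eA β (K i) {a, b} + eA β (K i) {b, c} + eA β (K i) {c, a}) ≥
      -3 * J0 * (Real.exp (2 * β * J0) - Real.exp (-(2 * β * J0))) /
        (Real.exp (2 * β * J0) + 3 * Real.exp (-(2 * β * J0))) := by
  have hprob (i : Fin 4) : patternProb β (K i) a b c = patternProb β (K 0) a b c := by
    have : environmentWeight β (K i) (triangleBonds a b c) =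
        environmentWeight β (K 0) (triangleBonds a b c) :=
      environmentWeight_congr fun B hB => by
        simp only [triangleBonds, mem_insert, mem_singleton, not_or] at hB
        exact hoff i 0 B hB.1 hB.2.1 hB.2.2
    unfold patternProb
    rw [this]
  have henergy (i : Fin 4) :
      eA β (K i) {a, b} + eA β (K i) {b, c} + eA β (K i) {c, a} =
        triangleEnergy β J0 (patternProb β (K 0) a b c i) := by
    rw [eA_triangle_eq_triangleEnergy hab hbc hca (hKab i) (hKbc i) (hKca i), hprob]
  rw [sum_congr rfl fun i _ => henergy i, ← triangleEnergy_quarter]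
  have := four_mul_triangleEnergy_quarter_le_sum hβ.le hJ.le
    (patternProb_nonneg β (K 0) a b c) (sum_patternProb β (K 0) a b c)
  linarith
end

section
/- In the same setting, letting configurations 5–8 be the four frustrated sign assignments of the triangle couplings (J_{12}J_{23}J_{31} = −J³ < 0), the average satisfies (1/4)∑_{i=5}^{8} e_TR(β,i) ≥ −3J·(e^{2βJ} − e^{−2βJ})/(3e^{2βJ} + e^{−2βJ}) for all β > 0. -/
open Finset Real

/-- The four frustrated sign assignments of the triangle couplings. -/
def signsF : Fin 4 → Fin 3 → ℝ :=
  ![![-1, -1, -1], ![-1, 1, 1], ![1, -1, 1], ![1, 1, -1]]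

/-!
A spin configuration breaks all three bonds of exactly one of the four frustrated coupling
assignments and exactly one bond of each of the other three. So on the triangle the energy is
`3 J0` on one of four classes of spin configurations and `-J0` on the others, the excited class
depending on the assignment. Since the couplings off the triangle are shared, each `e_TR` is the
Gibbs mean of this two-level energy with the same a priori weights of the four classes. Averaged
over which class is excited, such a Gibbs mean is at least its value for uniform weights (the
relevant function of each weight is convex), and that value is the energy of an isolated
frustrated triangle.
-/

/-- The function `x ↦ x / (A x + B (P - x))` is convex on `[0, P]` when `A ≤ B`, so it lies above
its tangent line at `x = P / n`. -/
lemma tangent_le_div_affine {A B P n x : ℝ} (hA : 0 < A) (hAB : A ≤ B) (hn : 1 ≤ n)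
    (hP : 0 < P) (hx : 0 ≤ x) (hxP : x ≤ P) :
    1 / (A + (n - 1) * B) + n ^ 2 * B / ((A + (n - 1) * B) ^ 2 * P) * (x - P / n) ≤
      x / (A * x + B * (P - x)) := by
  have hB : 0 < B := hA.trans_le hAB
  have hD : 0 < A + (n - 1) * B := by nlinarith
  have hy : 0 < A * x + B * (P - x) := by
    rcases hx.eq_or_lt with h | h
    · rw [← h]; nlinarith
    · nlinarith
  set D := A + (n - 1) * B with hD_def
  set y := A * x + B * (P - x) with hy_def
  have key : x / y - (1 / D + n ^ 2 * B / (D ^ 2 * P) * (x - P / n)) =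
      n ^ 2 * B * (B - A) * (x - P / n) ^ 2 / (y * D ^ 2 * P) := by
    field_simp
    rw [hD_def, hy_def]
    ring
  rw [← sub_nonneg, key]
  exact div_nonneg (mul_nonneg (mul_nonneg (by positivity) (sub_nonneg.2 hAB)) (sq_nonneg _))
    (by positivity)

lemma card_div_le_sum_div_affine {ι : Type*} [Fintype ι] [Nonempty ι] {A B : ℝ} (hA : 0 < A)
    (hAB : A ≤ B) {x : ι → ℝ} (hx : ∀ i, 0 ≤ x i) (hP : 0 < ∑ i, x i) :
    Fintype.card ι / (A + (Fintype.card ι - 1) * B) ≤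
      ∑ i, x i / (A * x i + B * (∑ j, x j - x i)) := by
  set P := ∑ j, x j
  set n : ℝ := (Fintype.card ι : ℝ)
  have hn : 1 ≤ n := Nat.one_le_cast.2 Fintype.card_pos
  have hD : 0 < A + (n - 1) * B := by nlinarith
  calc n / (A + (n - 1) * B)
      = ∑ i, (1 / (A + (n - 1) * B) + n ^ 2 * B / ((A + (n - 1) * B) ^ 2 * P) *
          (x i - P / n)) := by
        rw [sum_add_distrib, ← mul_sum, sum_sub_distrib, sum_const, sum_const, card_univ]
        simp only [nsmul_eq_mul]
        field_simp
        ring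
    _ ≤ _ := sum_le_sum fun i _ =>
        tangent_le_div_affine hA hAB hn hP (hx i) (single_le_sum (fun j _ => hx j) (mem_univ i))

/-- `x j` is the a priori weight of the state `j`. -/
noncomputable def gibbsMean {ι : Type*} [Fintype ι] (β : ℝ) (E x : ι → ℝ) : ℝ :=
  (∑ j, E j * exp (-β * E j) * x j) / ∑ j, exp (-β * E j) * x j

lemma sum_ite_mul {ι : Type*} [Fintype ι] [DecidableEq ι] (i : ι) (u v : ℝ) (x : ι → ℝ) :
    ∑ j, (if j = i then u else v) * x j = u * x i + v * (∑ j, x j - x i) := by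
  rw [Fintype.sum_eq_add_sum_compl i, Fintype.sum_eq_add_sum_compl i x, if_pos rfl,
    add_sub_cancel_left, mul_sum]
  congr 1
  exact sum_congr rfl fun j hj => by rw [if_neg (by simpa using hj)]

lemma gibbsMean_ite {ι : Type*} [Fintype ι] [DecidableEq ι] (β ε₀ ε₁ : ℝ) (x : ι → ℝ) (i : ι)
    (hi : exp (-β * ε₁) * x i + exp (-β * ε₀) * (∑ j, x j - x i) ≠ 0) :
    gibbsMean β (fun j => if j = i then ε₁ else ε₀) x = ε₀ + (ε₁ - ε₀) * exp (-β * ε₁) *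
      (x i / (exp (-β * ε₁) * x i + exp (-β * ε₀) * (∑ j, x j - x i))) := by
  have hnum : ∀ j, (if j = i then ε₁ else ε₀) * exp (-β * if j = i then ε₁ else ε₀) * x j =
      (if j = i then ε₁ * exp (-β * ε₁) else ε₀ * exp (-β * ε₀)) * x j := fun j => by
    split_ifs <;> rfl
  have hden : ∀ j, exp (-β * if j = i then ε₁ else ε₀) * x j =
      (if j = i then exp (-β * ε₁) else exp (-β * ε₀)) * x j := fun j => by split_ifs <;> rfl
  rw [gibbsMean, sum_congr rfl fun j _ => hnum j, sum_congr rfl fun j _ => hden j, sum_ite_mul,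
    sum_ite_mul, div_eq_iff hi, add_mul, mul_assoc _ (x i / _), div_mul_cancel₀ _ hi]
  ring

/-- The left side is `n` times the Gibbs mean for uniform a priori weights. -/
theorem card_mul_le_sum_gibbsMean_ite {ι : Type*} [Fintype ι] [DecidableEq ι] [Nonempty ι]
    {β ε₀ ε₁ : ℝ} (hβ : 0 ≤ β) (hε : ε₀ ≤ ε₁) {x : ι → ℝ} (hx : ∀ i, 0 ≤ x i)
    (hP : 0 < ∑ i, x i) :
    Fintype.card ι * ((ε₁ * exp (-β * ε₁) + (Fintype.card ι - 1) * (ε₀ * exp (-β * ε₀))) /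
      (exp (-β * ε₁) + (Fintype.card ι - 1) * exp (-β * ε₀))) ≤
      ∑ i, gibbsMean β (fun j => if j = i then ε₁ else ε₀) x := by
  set A := exp (-β * ε₁)
  set B := exp (-β * ε₀)
  set n : ℝ := (Fintype.card ι : ℝ)
  have hA : 0 < A := exp_pos _
  have hAB : A ≤ B := exp_le_exp.2 (by nlinarith)
  have hn : 1 ≤ n := Nat.one_le_cast.2 Fintype.card_pos
  have hD : 0 < A + (n - 1) * B := by nlinarith
  have hy : ∀ i, 0 < A * x i + B * (∑ j, x j - x i) := fun i => by
    have hxP : x i ≤ ∑ j, x j := single_le_sum (fun j _ => hx j) (mem_univ i)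
    rcases (hx i).eq_or_lt with h | h
    · rw [← h]; nlinarith
    · nlinarith
  calc n * ((ε₁ * A + (n - 1) * (ε₀ * B)) / (A + (n - 1) * B))
      = n * ε₀ + (ε₁ - ε₀) * A * (n / (A + (n - 1) * B)) := by
        field_simp
        ring
    _ ≤ n * ε₀ + (ε₁ - ε₀) * A * ∑ i, x i / (A * x i + B * (∑ j, x j - x i)) := by
        gcongr
        exact card_div_le_sum_div_affine hA hAB hx hP
    _ = ∑ i, gibbsMean β (fun j => if j = i then ε₁ else ε₀) x := by
        simp only [gibbsMean_ite β ε₀ ε₁ x _ (hy _).ne', sum_add_distrib, sum_const, card_univ,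
          nsmul_eq_mul, ← mul_sum]
        rfl

lemma sum_comp_mul_eq_sum_mul_sum_fiber {Ω ι : Type*} [Fintype Ω] [Fintype ι] [DecidableEq ι]
    (g : Ω → ι) (F : ι → ℝ) (w : Ω → ℝ) :
    ∑ S, F (g S) * w S = ∑ k, F k * ∑ S with g S = k, w S := by
  rw [← sum_fiberwise univ g]
  refine sum_congr rfl fun k _ => ?_
  rw [mul_sum]
  exact sum_congr rfl fun S hS => by rw [(mem_filter.1 hS).2]

lemma sum_texp {V ι : Type*} [Fintype V] [DecidableEq V] (β : ℝ) (J : Finset V → ℝ)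
    (s : Finset ι) (f : ι → (V → Bool) → ℝ) :
    ∑ A ∈ s, texp β J (f A) = texp β J fun S => ∑ A ∈ s, f A S := by
  simp only [texp, ← sum_div, sum_mul]
  rw [sum_comm]

lemma texp_comp_eq_gibbsMean {V ι : Type*} [Fintype V] [DecidableEq V] [Fintype ι]
    [DecidableEq ι] (β : ℝ) (J : Finset V → ℝ) (E : ι → ℝ) (g : (V → Bool) → ι)
    (R : (V → Bool) → ℝ) (hJ : ∀ S, energy J S = E (g S) + R S) :
    texp β J (fun S => E (g S)) =
      gibbsMean β E fun k => ∑ S with g S = k, exp (-β * R S) := by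
  have hw : ∀ S, exp (-β * energy J S) = exp (-β * E (g S)) * exp (-β * R S) := fun S => by
    rw [hJ, mul_add, exp_add]
  simp only [texp, Z, gibbsMean, hw, ← mul_assoc]
  rw [sum_comp_mul_eq_sum_mul_sum_fiber g (fun k => E k * exp (-β * E k)),
    sum_comp_mul_eq_sum_mul_sum_fiber g (fun k => exp (-β * E k))]

/-- The index `i` such that the spins `x, y, z` on `a, b, c` break all three bonds of the frustrated
configuration `signsF i`; they break exactly one bond of each of the other three. -/
def allBrokenConfig (x y z : Bool) : Fin 4 :=
  if x = y then (if y = z then 0 else 1) else (if y = z then 2 else 3)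

lemma triangle_energy_eq_ite (J0 : ℝ) (i : Fin 4) (x y z : Bool) :
    -(signsF i 0 * J0 * (spin x * spin y) + signsF i 1 * J0 * (spin y * spin z) +
      signsF i 2 * J0 * (spin z * spin x)) =
      if allBrokenConfig x y z = i then 3 * J0 else -J0 := by
  fin_cases i <;> cases x <;> cases y <;> cases z <;>
    simp [allBrokenConfig, signsF, spin] <;> ring

lemma pair_ne_pair {V : Type*} [DecidableEq V] {a b c : V} (hab : a ≠ b) (hca : c ≠ a) :
    ({a, b} : Finset V) ≠ {b, c} := by
  intro h
  have ha : a ∈ ({b, c} : Finset V) := h ▸ mem_insert_self a {b}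
  rcases mem_insert.1 ha with h' | h'
  exacts [hab h', hca (mem_singleton.1 h').symm]

lemma sum_triangle {V : Type*} [DecidableEq V] {a b c : V} (hab : a ≠ b) (hbc : b ≠ c)
    (hca : c ≠ a) (f : Finset V → ℝ) :
    ∑ B ∈ ({{a, b}, {b, c}, {c, a}} : Finset (Finset V)), f B = f {a, b} + f {b, c} + f {c, a} := by
  rw [sum_insert, sum_pair (pair_ne_pair hbc hab), add_assoc]
  simp [pair_ne_pair hab hca, (pair_ne_pair hca hbc).symm]

lemma energy_eq_of_eq_compl {V : Type*} [Fintype V] [DecidableEq V] {J J' : Finset V → ℝ}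
    {T : Finset (Finset V)} (h : ∀ B ∉ T, J B = J' B) (S : V → Bool) :
    energy J S = -∑ B ∈ T, J B * ∏ x ∈ B, spin (S x) + -∑ B ∈ Tᶜ, J' B * ∏ x ∈ B, spin (S x) := by
  rw [energy, ← sum_add_sum_compl T, neg_add]
  congr 2
  exact sum_congr rfl fun B hB => by rw [h B (mem_compl.1 hB)]

lemma isolated_frustrated_energy_eq (β J0 : ℝ) :
    -3 * J0 * (exp (2 * β * J0) - exp (-(2 * β * J0))) /
        (3 * exp (2 * β * J0) + exp (-(2 * β * J0))) =
      (3 * J0 * exp (-β * (3 * J0)) + (4 - 1) * (-J0 * exp (-β * -J0))) /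
        (exp (-β * (3 * J0)) + (4 - 1) * exp (-β * -J0)) := by
  have h₁ : exp (2 * β * J0) = exp (-β * -J0) * exp (-β * -J0) := by
    rw [← exp_add]; ring_nf
  have h₂ : exp (-(2 * β * J0)) = exp (-β * (3 * J0)) * exp (-β * -J0) := by
    rw [← exp_add]; ring_nf
  rw [h₁, h₂]
  field_simp
  ring

/-- average of the triangle energy over the four frustrated
bond configurations is bounded below by the isolated frustrated triangle
energy. -/
theorem frustrated_average_bound {V : Type*} [Fintype V] [DecidableEq V]
    (β J0 : ℝ) (hβ : 0 < β) (hJ : 0 < J0) (a b c : V)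
    (hab : a ≠ b) (hbc : b ≠ c) (hca : c ≠ a)
    (K : Fin 4 → Finset V → ℝ)
    (hKab : ∀ i, K i {a, b} = signsF i 0 * J0)
    (hKbc : ∀ i, K i {b, c} = signsF i 1 * J0)
    (hKca : ∀ i, K i {c, a} = signsF i 2 * J0)
    (hoff : ∀ i j, ∀ B : Finset V,
      B ≠ {a, b} → B ≠ {b, c} → B ≠ {c, a} → K i B = K j B) :
    (1 / 4) * ∑ i : Fin 4,
        (eA β (K i) {a, b} + eA β (K i) {b, c} + eA β (K i) {c, a}) ≥
      -3 * J0 * (Real.exp (2 * β * J0) - Real.exp (-(2 * β * J0))) /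
        (3 * Real.exp (2 * β * J0) + Real.exp (-(2 * β * J0))) := by
  set T : Finset (Finset V) := {{a, b}, {b, c}, {c, a}}
  let g : (V → Bool) → Fin 4 := fun S => allBrokenConfig (S a) (S b) (S c)
  let E : Fin 4 → Fin 4 → ℝ := fun i k => if k = i then 3 * J0 else -J0
  let R : (V → Bool) → ℝ := fun S => -∑ B ∈ Tᶜ, K 0 B * ∏ x ∈ B, spin (S x)
  have triangle : ∀ i S, -∑ B ∈ T, K i B * ∏ x ∈ B, spin (S x) = E i (g S) := fun i S => by
    rw [sum_triangle hab hbc hca, prod_pair hab, prod_pair hbc, prod_pair hca, hKab, hKbc, hKca]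
    exact triangle_energy_eq_ite J0 i _ _ _
  have energy_eq : ∀ i S, energy (K i) S = E i (g S) + R S := fun i S => by
    refine (energy_eq_of_eq_compl (fun B hB => ?_) S).trans (congrArg (· + R S) (triangle i S))
    simp only [T, mem_insert, mem_singleton, not_or] at hB
    exact hoff i 0 B hB.1 hB.2.1 hB.2.2
  have local_sum : ∀ i, eA β (K i) {a, b} + eA β (K i) {b, c} + eA β (K i) {c, a} =
      gibbsMean β (E i) fun k => ∑ S with g S = k, exp (-β * R S) := fun i => by
    rw [← texp_comp_eq_gibbsMean β (K i) (E i) g R (energy_eq i),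
      ← sum_triangle hab hbc hca (eA β (K i))]
    simp only [eA, sum_texp, sum_neg_distrib]
    exact congrArg _ (funext (triangle i))
  set p : Fin 4 → ℝ := fun k => ∑ S with g S = k, exp (-β * R S)
  have hp : ∀ k, 0 ≤ p k := fun k => sum_nonneg fun S _ => (exp_pos _).le
  have hp_sum : 0 < ∑ k, p k := by
    rw [sum_fiberwise]
    exact sum_pos (fun S _ => exp_pos _) univ_nonempty
  have key := card_mul_le_sum_gibbsMean_ite hβ.le (by linarith : -J0 ≤ 3 * J0) hp hp_sum
  rw [Fintype.card_fin, Nat.cast_ofNat] at key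
  simp only [local_sum, ge_iff_le, isolated_frustrated_energy_eq]
  linarith
end
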